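/- In any ontological model for ℂ² with D injective, for all unit vectors ψ, φ ∈ ℂ²: ρ₁(Λ_ψ ∩ Λ_φ) = tr(P_ψ·P_φ) = |⟨ψ, φ⟩|², where ρ₁ := 2·D⁻¹(½I) and Λ_χ := {λ ∈ Λ : p_{P_χ}(λ) = 1}. -/

import Mathlib

open MeasureTheory
open scoped NNReal ENNReal ComplexOrder

noncomputable section

/-- The rank-one projection `|ψ⟩⟨ψ|` associated with a vector `ψ ∈ ℂⁿ`. -/
def proj {n : ℕ} (ψ : EuclideanSpace ℂ (Fin n)) : Matrix (Fin n) (Fin n) ℂ :=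
  Matrix.of fun i j => ψ i * (starRingEnd ℂ) (ψ j)

/-- An ontological model for `ℂⁿ`: a measurable space `Λ` of ontic states, a convex set `C`
of preparable probability measures on `Λ`, measurable response functions `p A : Λ → [0,1]`
for each effect `A` (`0 ≤ A ≤ 1` in the Loewner order), and a map `D` from `C` onto the set
of density matrices reproducing the quantum statistics. -/
structure OntModel (n : ℕ) (Λ : Type*) [MeasurableSpace Λ] where
  C : Set (Measure Λ)
  prob : ∀ ρ ∈ C, IsProbabilityMeasure ρ
  convexC : ∀ ρa ∈ C, ∀ ρb ∈ C, ∀ s : ℝ≥0, s ≤ 1 → s • ρa + (1 - s) • ρb ∈ C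
  p : Matrix (Fin n) (Fin n) ℂ → Λ → ℝ
  p_meas : ∀ A, Measurable (p A)
  p_nonneg : ∀ A l, 0 ≤ p A l
  p_le_one : ∀ A l, p A l ≤ 1
  D : Measure Λ → Matrix (Fin n) (Fin n) ℂ
  D_psd : ∀ ρ ∈ C, (D ρ).PosSemidef
  D_trace : ∀ ρ ∈ C, (D ρ).trace = 1
  D_surj : ∀ W : Matrix (Fin n) (Fin n) ℂ, W.PosSemidef → W.trace = 1 → ∃ ρ ∈ C, D ρ = W
  agree : ∀ ρ ∈ C, ∀ A : Matrix (Fin n) (Fin n) ℂ, A.PosSemidef → (1 - A).PosSemidef →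
    ((∫ l, p A l ∂ρ : ℝ) : ℂ) = (D ρ * A).trace

end

/-! Every pure state `P_χ` has the orthogonal complement `P_{χ⊥} = 1 - P_χ`, so
`½ P_χ + ½ P_{χ⊥} = ½ I`. Since `∫ p_A dρ = tr(D(ρ) A)` is affine in `ρ` and a matrix is determined
by its traces against rank-one projections, `D` is affine on `C`; injectivity then gives
`ρ₁ = ρ_χ + ρ_{χ⊥}` for any preimages `ρ_χ`, `ρ_{χ⊥}` of `P_χ`, `P_{χ⊥}`. Under `ρ_χ` the response
`p_{P_χ}` is `1` almost everywhere and under `ρ_{χ⊥}` it is `0`, so `p_{P_χ}` is `ρ₁`-a.e. the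
indicator of `Λ_χ`. With `χ = ψ` this gives `ρ₁(Λ_ψ ∩ Λ_φ) = ρ_ψ(Λ_φ)`, and with `χ = φ` the latter
is `∫ p_{P_φ} dρ_ψ = tr(P_ψ P_φ)`. -/

open Matrix

section Proj

variable {n : ℕ}

lemma proj_eq_vecMulVec (ψ : EuclideanSpace ℂ (Fin n)) :
    proj ψ = vecMulVec (WithLp.ofLp ψ) (star (WithLp.ofLp ψ)) := rfl

lemma posSemidef_proj (ψ : EuclideanSpace ℂ (Fin n)) : (proj ψ).PosSemidef :=
  posSemidef_vecMulVec_self_star _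

lemma trace_proj_mul_proj (ψ φ : EuclideanSpace ℂ (Fin n)) :
    (proj ψ * proj φ).trace = ((‖(inner ℂ ψ φ : ℂ)‖ ^ 2 : ℝ) : ℂ) := by
  calc (proj ψ * proj φ).trace = inner ℂ ψ φ * inner ℂ φ ψ := by
        rw [proj_eq_vecMulVec ψ, proj_eq_vecMulVec φ, vecMulVec_mul_vecMulVec, trace_vecMulVec,
          dotProduct_smul, smul_eq_mul, dotProduct_comm]
        rfl
    _ = _ := by rw [← inner_conj_symm φ ψ, Complex.mul_conj', Complex.ofReal_pow]

lemma trace_proj (ψ : EuclideanSpace ℂ (Fin n)) : (proj ψ).trace = ((‖ψ‖ ^ 2 : ℝ) : ℂ) := by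
  rw [proj_eq_vecMulVec, trace_vecMulVec]
  exact_mod_cast inner_self_eq_norm_sq_to_K (𝕜 := ℂ) ψ

lemma proj_mul_self {ψ : EuclideanSpace ℂ (Fin n)} (hψ : ‖ψ‖ = 1) : proj ψ * proj ψ = proj ψ := by
  have h : star (WithLp.ofLp ψ) ⬝ᵥ WithLp.ofLp ψ = 1 := by
    rw [dotProduct_comm]
    exact_mod_cast (inner_self_eq_norm_sq_to_K (𝕜 := ℂ) ψ).trans (by simp [hψ])
  rw [proj_eq_vecMulVec, vecMulVec_mul_vecMulVec, h, one_smul]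

lemma trace_proj_mul_self {ψ : EuclideanSpace ℂ (Fin n)} (hψ : ‖ψ‖ = 1) :
    (proj ψ * proj ψ).trace = 1 := by
  simp [proj_mul_self hψ, trace_proj, hψ]

lemma posSemidef_one_sub_proj {ψ : EuclideanSpace ℂ (Fin n)} (hψ : ‖ψ‖ = 1) :
    (1 - proj ψ).PosSemidef := by
  have h : (1 - proj ψ)ᴴ * (1 - proj ψ) = 1 - proj ψ := by
    rw [conjTranspose_sub, conjTranspose_one, (posSemidef_proj ψ).isHermitian.eq, sub_mul, mul_sub,
      mul_sub, proj_mul_self hψ]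
    simp
  rw [← h]
  exact posSemidef_conjTranspose_mul_self _

lemma trace_mul_proj_eq_inner (A : Matrix (Fin n) (Fin n) ℂ) (x : EuclideanSpace ℂ (Fin n)) :
    (A * proj x).trace = inner ℂ x (toLpLin 2 2 A x) := by
  rw [proj_eq_vecMulVec, mul_vecMulVec, trace_vecMulVec]
  rfl

lemma Matrix.ext_of_trace_mul_proj {A B : Matrix (Fin n) (Fin n) ℂ}
    (h : ∀ x : EuclideanSpace ℂ (Fin n), ‖x‖ = 1 → (A * proj x).trace = (B * proj x).trace) :
    A = B := by
  apply (toLpLin 2 2).injective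
  rw [← ext_inner_map]
  intro x
  rw [← inner_conj_symm (toLpLin 2 2 A x), ← inner_conj_symm (toLpLin 2 2 B x)]
  congr 1
  rcases eq_or_ne x 0 with rfl | hx
  · simp
  obtain ⟨c, u, hu, rfl⟩ : ∃ (c : ℂ) (u : EuclideanSpace ℂ (Fin n)), ‖u‖ = 1 ∧ x = c • u :=
    ⟨‖x‖, _, norm_smul_inv_norm (𝕜 := ℂ) hx, by simp [smul_smul, hx]⟩
  have hAB := h u hu
  rw [trace_mul_proj_eq_inner, trace_mul_proj_eq_inner] at hAB
  rw [map_smul, map_smul, inner_smul_left, inner_smul_left, inner_smul_right, inner_smul_right,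
    hAB]

end Proj

def perp (ψ : EuclideanSpace ℂ (Fin 2)) : EuclideanSpace ℂ (Fin 2) :=
  !₂[-starRingEnd ℂ (ψ 1), starRingEnd ℂ (ψ 0)]

lemma norm_perp (ψ : EuclideanSpace ℂ (Fin 2)) : ‖perp ψ‖ = ‖ψ‖ := by
  simp [EuclideanSpace.norm_eq, perp, Fin.sum_univ_two, add_comm]

lemma proj_add_proj_perp {ψ : EuclideanSpace ℂ (Fin 2)} (hψ : ‖ψ‖ = 1) :
    proj ψ + proj (perp ψ) = 1 := by
  have h : ψ 0 * starRingEnd ℂ (ψ 0) + ψ 1 * starRingEnd ℂ (ψ 1) = 1 := by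
    simpa [hψ, Matrix.trace, Fin.sum_univ_two, proj] using trace_proj ψ
  ext i j
  fin_cases i <;> fin_cases j <;> simp [proj, perp] <;> first | linear_combination h | ring

lemma trace_proj_perp_mul_proj {ψ : EuclideanSpace ℂ (Fin 2)} (hψ : ‖ψ‖ = 1) :
    (proj (perp ψ) * proj ψ).trace = 0 := by
  rw [eq_sub_of_add_eq' (proj_add_proj_perp hψ), Matrix.sub_mul, Matrix.one_mul,
    proj_mul_self hψ, sub_self, Matrix.trace_zero]

namespace OntModel

variable {Λ : Type*} [MeasurableSpace Λ]

section

variable {n : ℕ} (M : OntModel n Λ)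

/-- The set `Λ_ψ` of the statement. -/
def certainSet (ψ : EuclideanSpace ℂ (Fin n)) : Set Λ := {l | M.p (proj ψ) l = 1}

lemma integrable_p (A : Matrix (Fin n) (Fin n) ℂ) (μ : Measure Λ) [IsFiniteMeasure μ] :
    Integrable (M.p A) μ :=
  .of_bound (M.p_meas A).aestronglyMeasurable 1 <| .of_forall fun l => by
    rw [Real.norm_of_nonneg (M.p_nonneg A l)]; exact M.p_le_one A l

variable {M}

lemma integral_p_eq_re_trace {ρ : Measure Λ} (hρ : ρ ∈ M.C) {A : Matrix (Fin n) (Fin n) ℂ}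
    (hA : A.PosSemidef) (hA' : (1 - A).PosSemidef) : ∫ l, M.p A l ∂ρ = (M.D ρ * A).trace.re := by
  rw [← M.agree ρ hρ A hA hA', Complex.ofReal_re]

lemma ae_p_eq_zero {ρ : Measure Λ} (hρ : ρ ∈ M.C) {A : Matrix (Fin n) (Fin n) ℂ}
    (hA : A.PosSemidef) (hA' : (1 - A).PosSemidef) (h : (M.D ρ * A).trace = 0) :
    ∀ᵐ l ∂ρ, M.p A l = 0 := by
  have := M.prob ρ hρ
  refine (integral_eq_zero_iff_of_nonneg (M.p_nonneg A) (M.integrable_p A ρ)).mp ?_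
  rw [integral_p_eq_re_trace hρ hA hA', h, Complex.zero_re]

lemma ae_p_eq_one {ρ : Measure Λ} (hρ : ρ ∈ M.C) {A : Matrix (Fin n) (Fin n) ℂ}
    (hA : A.PosSemidef) (hA' : (1 - A).PosSemidef) (h : (M.D ρ * A).trace = 1) :
    ∀ᵐ l ∂ρ, M.p A l = 1 := by
  have := M.prob ρ hρ
  have hint : ∫ l, (1 - M.p A l) ∂ρ = 0 := by
    rw [integral_sub (integrable_const 1) (M.integrable_p A ρ),
      integral_p_eq_re_trace hρ hA hA', h]
    simp
  filter_upwards [(integral_eq_zero_iff_of_nonneg (fun l => sub_nonneg.2 (M.p_le_one A l))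
    ((integrable_const 1).sub (M.integrable_p A ρ))).mp hint] with l hl
  exact (sub_eq_zero.mp hl).symm

lemma D_smul_add_smul {ρa ρb : Measure Λ} (hρa : ρa ∈ M.C) (hρb : ρb ∈ M.C) {s : ℝ≥0}
    (hs : s ≤ 1) :
    M.D (s • ρa + (1 - s) • ρb) = s • M.D ρa + (1 - s) • M.D ρb := by
  have := M.prob ρa hρa
  have := M.prob ρb hρb
  refine Matrix.ext_of_trace_mul_proj fun x hx => ?_
  have hstat : ∀ ρ ∈ M.C, (M.D ρ * proj x).trace = ∫ l, M.p (proj x) l ∂ρ := fun ρ hρ =>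
    (M.agree ρ hρ _ (posSemidef_proj x) (posSemidef_one_sub_proj hx)).symm
  rw [hstat _ (M.convexC ρa hρa ρb hρb s hs), Matrix.add_mul, Matrix.smul_mul, Matrix.smul_mul,
    Matrix.trace_add, Matrix.trace_smul, Matrix.trace_smul, hstat ρa hρa, hstat ρb hρb,
    integral_add_measure ((M.integrable_p _ ρa).smul_measure_nnreal)
      ((M.integrable_p _ ρb).smul_measure_nnreal),
    integral_smul_nnreal_measure, integral_smul_nnreal_measure]
  simp only [NNReal.smul_def, smul_eq_mul, Complex.real_smul, Complex.ofReal_add,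
    Complex.ofReal_mul]

lemma exists_D_eq_proj {ψ : EuclideanSpace ℂ (Fin n)} (hψ : ‖ψ‖ = 1) :
    ∃ ρ ∈ M.C, M.D ρ = proj ψ :=
  M.D_surj _ (posSemidef_proj ψ) (by simp [trace_proj, hψ])

lemma measurableSet_certainSet (ψ : EuclideanSpace ℂ (Fin n)) : MeasurableSet (M.certainSet ψ) :=
  M.p_meas _ (measurableSet_singleton 1)

lemma ae_p_proj_eq_one {ρ : Measure Λ} (hρ : ρ ∈ M.C) {ψ : EuclideanSpace ℂ (Fin n)}
    (hψ : ‖ψ‖ = 1) (hD : M.D ρ = proj ψ) : ∀ᵐ l ∂ρ, M.p (proj ψ) l = 1 :=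
  ae_p_eq_one hρ (posSemidef_proj ψ) (posSemidef_one_sub_proj hψ)
    (by rw [hD, trace_proj_mul_self hψ])

end

section Qubit

variable {M : OntModel 2 Λ}

lemma ae_p_proj_eq_zero {ρ : Measure Λ} (hρ : ρ ∈ M.C) {ψ : EuclideanSpace ℂ (Fin 2)}
    (hψ : ‖ψ‖ = 1) (hD : M.D ρ = proj (perp ψ)) : ∀ᵐ l ∂ρ, M.p (proj ψ) l = 0 :=
  ae_p_eq_zero hρ (posSemidef_proj ψ) (posSemidef_one_sub_proj hψ)
    (by rw [hD, trace_proj_perp_mul_proj hψ])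

lemma two_smul_eq_add_of_D_eq_proj (hinj : ∀ ρa ∈ M.C, ∀ ρb ∈ M.C, M.D ρa = M.D ρb → ρa = ρb)
    {ρhalf : Measure Λ} (hρhalf : ρhalf ∈ M.C) (hDhalf : M.D ρhalf = (1 / 2 : ℂ) • 1)
    {ψ : EuclideanSpace ℂ (Fin 2)} (hψ : ‖ψ‖ = 1) {ρa ρb : Measure Λ} (hρa : ρa ∈ M.C)
    (hρb : ρb ∈ M.C) (hDa : M.D ρa = proj ψ) (hDb : M.D ρb = proj (perp ψ)) :
    (2 : ℝ≥0) • ρhalf = ρa + ρb := by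
  have hhalf : (1 : ℝ≥0) - 2⁻¹ = 2⁻¹ := tsub_eq_of_eq_add (by norm_num)
  have hmix := M.convexC ρa hρa ρb hρb 2⁻¹ (by norm_num)
  have hD : M.D ((2⁻¹ : ℝ≥0) • ρa + (1 - (2⁻¹ : ℝ≥0)) • ρb) = M.D ρhalf := by
    rw [D_smul_add_smul hρa hρb (by norm_num), hDa, hDb, hhalf, ← smul_add, proj_add_proj_perp hψ,
      hDhalf]
    ext i j
    simp [NNReal.smul_def]
  rw [← hinj _ hmix _ hρhalf hD, hhalf, ← smul_add, smul_smul]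
  norm_num

lemma p_proj_ae_eq_indicator (hinj : ∀ ρa ∈ M.C, ∀ ρb ∈ M.C, M.D ρa = M.D ρb → ρa = ρb)
    {ρhalf : Measure Λ} (hρhalf : ρhalf ∈ M.C) (hDhalf : M.D ρhalf = (1 / 2 : ℂ) • 1)
    {φ : EuclideanSpace ℂ (Fin 2)} (hφ : ‖φ‖ = 1) :
    M.p (proj φ) =ᵐ[ρhalf] (M.certainSet φ).indicator 1 := by
  obtain ⟨ρa, hρa, hDa⟩ := M.exists_D_eq_proj hφ
  obtain ⟨ρb, hρb, hDb⟩ := M.exists_D_eq_proj ((norm_perp φ).trans hφ)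
  rw [Filter.EventuallyEq, ← Measure.ae_smul_measure_eq (two_ne_zero' ℝ≥0),
    two_smul_eq_add_of_D_eq_proj hinj hρhalf hDhalf hφ hρa hρb hDa hDb, ae_add_measure_iff]
  constructor
  · filter_upwards [ae_p_proj_eq_one hρa hφ hDa] with l hl
    simp [certainSet, hl]
  · filter_upwards [ae_p_proj_eq_zero hρb hφ hDb] with l hl
    simp [certainSet, hl]

lemma measure_certainSet_eq_ofReal_integral
    (hinj : ∀ ρa ∈ M.C, ∀ ρb ∈ M.C, M.D ρa = M.D ρb → ρa = ρb)
    {ρhalf : Measure Λ} (hρhalf : ρhalf ∈ M.C) (hDhalf : M.D ρhalf = (1 / 2 : ℂ) • 1)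
    {φ : EuclideanSpace ℂ (Fin 2)} (hφ : ‖φ‖ = 1) {ρ : Measure Λ} [IsFiniteMeasure ρ]
    (hρ : ρ ≪ ρhalf) : ρ (M.certainSet φ) = ENNReal.ofReal (∫ l, M.p (proj φ) l ∂ρ) := by
  rw [integral_congr_ae (hρ.ae_eq (p_proj_ae_eq_indicator hinj hρhalf hDhalf hφ)),
    integral_indicator_one (M.measurableSet_certainSet φ), ofReal_measureReal]

end Qubit

end OntModel

/-- In an ontological model for `ℂ²` with `D` injective, for all unit vectors `ψ, φ`:
`ρ₁(Λ_ψ ∩ Λ_φ) = tr(P_ψ P_φ) = |⟨ψ, φ⟩|²`, where `ρ₁ = 2 · D⁻¹(½ I)` and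
`Λ_χ = {λ : p_{P_χ}(λ) = 1}`. -/
theorem rho1_inter_eq_trace {Λ : Type*} [MeasurableSpace Λ] (M : OntModel 2 Λ)
    (hinj : ∀ ρa ∈ M.C, ∀ ρb ∈ M.C, M.D ρa = M.D ρb → ρa = ρb)
    (ψ φ : EuclideanSpace ℂ (Fin 2)) (hψ : ‖ψ‖ = 1) (hφ : ‖φ‖ = 1)
    (ρhalf : Measure Λ) (hρhalf : ρhalf ∈ M.C)
    (hDhalf : M.D ρhalf = (1 / 2 : ℂ) • 1) :
    ((2 : ℝ≥0) • ρhalf) ({l | M.p (proj ψ) l = 1} ∩ {l | M.p (proj φ) l = 1})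
        = ENNReal.ofReal (‖(inner ℂ ψ φ : ℂ)‖ ^ 2)
    ∧ (proj ψ * proj φ).trace = ((‖(inner ℂ ψ φ : ℂ)‖ ^ 2 : ℝ) : ℂ) := by
  refine ⟨?_, trace_proj_mul_proj ψ φ⟩
  obtain ⟨ρa, hρa, hDa⟩ := M.exists_D_eq_proj hψ
  obtain ⟨ρb, hρb, hDb⟩ := M.exists_D_eq_proj ((norm_perp ψ).trans hψ)
  have := M.prob ρa hρa
  have hdec := OntModel.two_smul_eq_add_of_D_eq_proj hinj hρhalf hDhalf hψ hρa hρb hDa hDb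
  have hac : ρa ≪ ρhalf := (Measure.absolutelyContinuous_of_le
    (hdec ▸ Measure.le_add_right le_rfl)).trans (Measure.AbsolutelyContinuous.rfl.smul_left _)
  have hψa : ρa (M.certainSet ψ)ᶜ = 0 := OntModel.ae_p_proj_eq_one hρa hψ hDa
  have hψb : ρb (M.certainSet ψ) = 0 :=
    measure_mono_null (fun l (hl : M.p (proj ψ) l = 1) => by simp [hl])
      (ae_iff.1 (OntModel.ae_p_proj_eq_zero hρb hψ hDb))
  change ((2 : ℝ≥0) • ρhalf) (M.certainSet ψ ∩ M.certainSet φ) = _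
  calc ((2 : ℝ≥0) • ρhalf) (M.certainSet ψ ∩ M.certainSet φ)
      = ρa (M.certainSet ψ ∩ M.certainSet φ) := by
        rw [hdec, Measure.add_apply, measure_inter_null_of_null_left _ hψb, add_zero]
    _ = ρa (M.certainSet φ) := by rw [Set.inter_comm, measure_inter_conull hψa]
    _ = ENNReal.ofReal (∫ l, M.p (proj φ) l ∂ρa) :=
        OntModel.measure_certainSet_eq_ofReal_integral hinj hρhalf hDhalf hφ hac
    _ = ENNReal.ofReal (‖(inner ℂ ψ φ : ℂ)‖ ^ 2) := by
        rw [OntModel.integral_p_eq_re_trace hρa (posSemidef_proj φ) (posSemidef_one_sub_proj hφ),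
          hDa, trace_proj_mul_proj, Complex.ofReal_re]
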